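/- arXiv:2605.31569 — 2 statements merged into one kernel-verified Lean document; each statement's English description precedes it below -/
import Mathlib

section
/- The update-wins Map⟨Set⟩ specification-level semantics (SLS) agrees with its compositional realization (ICS): for every operation context, contains(k, x) holds under SLS iff k is in the key set (add-wins over keys, where upd(k,·) acts as add(k) and rmv(k) as del(k)) and x is in the value set for k (add-wins over values from upd(k, add(x)) / upd(k, del(x)) events, excluding upd events followed by a visible rmv(k)). -/
/-- Operations of a Map⟨Set⟩: `upd(k, add x)`, `upd(k, del x)`, `rmv(k)`. -/
inductive MapOp (K V : Type) where
  | updAdd (k : K) (x : V)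
  | updDel (k : K) (x : V)
  | rmv (k : K)

def visible {E : Type} (vis : E → E → Prop) : E → E → Prop :=
  Relation.TransGen vis

/-- SLS: contains(k,x) iff some `upd(k, add x)` event has no visible later
`rmv(k)` and no visible later `upd(k, del x)`. -/
def slsContains {E K V : Type} (op : E → MapOp K V) (vis : E → E → Prop)
    (k : K) (x : V) : Prop :=
  ∃ e, op e = MapOp.updAdd k x ∧
    (¬ ∃ e', op e' = MapOp.rmv k ∧ visible vis e e') ∧
    (¬ ∃ e'', op e'' = MapOp.updDel k x ∧ visible vis e e'')

/-- ICS key set: add-wins set over keys, where `upd(k,·)` acts as `add(k)` and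
`rmv(k)` as `del(k)`. -/
def icsKeyPresent {E K V : Type} (op : E → MapOp K V) (vis : E → E → Prop)
    (k : K) : Prop :=
  ∃ e, (∃ x, op e = MapOp.updAdd k x ∨ op e = MapOp.updDel k x) ∧
    ¬ ∃ e', op e' = MapOp.rmv k ∧ visible vis e e'

/-- ICS value set for key `k`: add-wins over values from upd events,
restricted to upd events with no visible later `rmv(k)`. -/
def icsValPresent {E K V : Type} (op : E → MapOp K V) (vis : E → E → Prop)
    (k : K) (x : V) : Prop :=
  ∃ e, op e = MapOp.updAdd k x ∧
    (¬ ∃ r, op r = MapOp.rmv k ∧ visible vis e r) ∧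
    ¬ ∃ e', op e' = MapOp.updDel k x ∧
      (¬ ∃ r, op r = MapOp.rmv k ∧ visible vis e' r) ∧ visible vis e e'

/-! An `upd(k, add x)` event with no visible later `rmv(k)` already puts `k` in the key set, and
since visibility is transitive, every `upd(k, del x)` event visible from it also has no visible
later `rmv(k)`. So the restriction on deletions in the ICS value set is vacuous, and ICS reduces
to SLS. -/

section

variable {E K V : Type} (op : E → MapOp K V) (vis : E → E → Prop) (k : K)

theorem not_exists_visible_rmv_of_visible {e e' : E} (hv : visible vis e e')
    (hr : ¬ ∃ r, op r = .rmv k ∧ visible vis e r) : ¬ ∃ r, op r = .rmv k ∧ visible vis e' r :=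
  fun ⟨r, hrk, hvr⟩ => hr ⟨r, hrk, hv.trans hvr⟩

variable {k} {x : V}

theorem icsKeyPresent_of_icsValPresent : icsValPresent op vis k x → icsKeyPresent op vis k
  | ⟨e, he, hr, _⟩ => ⟨e, ⟨x, .inl he⟩, hr⟩

theorem slsContains_iff_icsValPresent : slsContains op vis k x ↔ icsValPresent op vis k x :=
  exists_congr fun _ => and_congr_right fun _ => and_congr_right fun hr => not_congr
    ⟨fun ⟨e', hd, hv⟩ => ⟨e', hd, not_exists_visible_rmv_of_visible op vis k hv hr, hv⟩,
      fun ⟨e', hd, _, hv⟩ => ⟨e', hd, hv⟩⟩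

end

/-- SLS and ICS of the update-wins Map⟨Set⟩ agree on every operation context. -/
theorem stmt7 {E K V : Type} (op : E → MapOp K V) (vis : E → E → Prop)
    (k : K) (x : V) :
    slsContains op vis k x ↔ icsKeyPresent op vis k ∧ icsValPresent op vis k x := by
  rw [slsContains_iff_icsValPresent, iff_and_self]
  exact icsKeyPresent_of_icsValPresent op vis
end

section
/- Dangling edge safety for the ICS of the DD graph: for every well-formed operation context, the compositional realization (node set as add-wins set; edge set as add-wins set of pairs, where rmvN(n) translates to del of every edge incident to n that was added visibly before the removal) produces a state with no dangling edges. -/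
inductive GOp (N : Type) where
  | addN (n : N)
  | rmvN (n : N)
  | addE (n m : N)
  | rmvE (n m : N)

/-- Derived NodeSet add events: addN(n), or addE incident to n. -/
def nAdd {E N : Type} (op : E → GOp N) (e : E) (n : N) : Prop :=
  op e = GOp.addN n ∨ ∃ m, op e = GOp.addE n m ∨ op e = GOp.addE m n

/-- Derived NodeSet del events: rmvN(n). -/
def nDel {E N : Type} (op : E → GOp N) (e : E) (n : N) : Prop :=
  op e = GOp.rmvN n

/-- Derived EdgeSet add events: addE(n,m). -/
def eAdd {E N : Type} (op : E → GOp N) (e : E) (n m : N) : Prop :=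
  op e = GOp.addE n m

/-- Derived EdgeSet del events: rmvE(n,m), or a rmvN of an endpoint for which
an addE event creating this edge is visible before the removal. -/
def eDel {E N : Type} (op : E → GOp N) (vis : E → E → Prop) (e : E) (n m : N) : Prop :=
  op e = GOp.rmvE n m ∨
  (op e = GOp.rmvN n ∧ ∃ a, op a = GOp.addE n m ∧ visible vis a e) ∨
  (op e = GOp.rmvN m ∧ ∃ a, op a = GOp.addE n m ∧ visible vis a e)

/-- ICS node set: add-wins. -/
def icsNodePresent {E N : Type} (op : E → GOp N) (vis : E → E → Prop) (n : N) : Prop :=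
  ∃ e, nAdd op e n ∧ ¬ ∃ e', nDel op e' n ∧ visible vis e e'

/-- ICS edge set: add-wins on pairs. -/
def icsEdgePresent {E N : Type} (op : E → GOp N) (vis : E → E → Prop) (n m : N) : Prop :=
  ∃ e, eAdd op e n m ∧ ¬ ∃ e', eDel op vis e' n m ∧ visible vis e e'

/-- Well-formedness: addE and rmvN only occur for nodes added by prior visible addN. -/
def wellFormed {E N : Type} (op : E → GOp N) (vis : E → E → Prop) : Prop :=
  (∀ e u v, op e = GOp.addE u v →
    (∃ a, op a = GOp.addN u ∧ visible vis a e) ∧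
    (∃ a, op a = GOp.addN v ∧ visible vis a e)) ∧
  (∀ e n, op e = GOp.rmvN n → ∃ a, op a = GOp.addN n ∧ visible vis a e)

/-!
An edge `(u, v)` is present because of some `addE(u, v)` event that no visible edge deletion
follows. That same event adds `u` and `v` to the node set, and a visible `rmvN u` or `rmvN v`
after it would, by the translation of `rmvN`, also delete the edge `(u, v)`. So the event
keeps both endpoints in the node set.
-/

section
variable {E N : Type} {op : E → GOp N} {vis : E → E → Prop}

lemma nAdd_left_of_eAdd {e : E} {u v : N} (h : eAdd op e u v) : nAdd op e u :=
  Or.inr ⟨v, Or.inl h⟩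

lemma nAdd_right_of_eAdd {e : E} {u v : N} (h : eAdd op e u v) : nAdd op e v :=
  Or.inr ⟨u, Or.inr h⟩

lemma eDel_of_nDel_left {a e : E} {u v : N} (hadd : eAdd op a u v) (hdel : nDel op e u)
    (hvis : visible vis a e) : eDel op vis e u v :=
  Or.inr (Or.inl ⟨hdel, a, hadd, hvis⟩)

lemma eDel_of_nDel_right {a e : E} {u v : N} (hadd : eAdd op a u v) (hdel : nDel op e v)
    (hvis : visible vis a e) : eDel op vis e u v :=
  Or.inr (Or.inr ⟨hdel, a, hadd, hvis⟩)

lemma icsNodePresent_left_of_icsEdgePresent {u v : N} (h : icsEdgePresent op vis u v) :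
    icsNodePresent op vis u := by
  obtain ⟨a, hadd, hsurvives⟩ := h
  refine ⟨a, nAdd_left_of_eAdd hadd, ?_⟩
  rintro ⟨e, hdel, hvis⟩
  exact hsurvives ⟨e, eDel_of_nDel_left hadd hdel hvis, hvis⟩

lemma icsNodePresent_right_of_icsEdgePresent {u v : N} (h : icsEdgePresent op vis u v) :
    icsNodePresent op vis v := by
  obtain ⟨a, hadd, hsurvives⟩ := h
  refine ⟨a, nAdd_right_of_eAdd hadd, ?_⟩
  rintro ⟨e, hdel, hvis⟩
  exact hsurvives ⟨e, eDel_of_nDel_right hadd hdel hvis, hvis⟩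

end

theorem stmt11_general {E N : Type} (op : E → GOp N) (vis : E → E → Prop) :
    ∀ u v, icsEdgePresent op vis u v →
      icsNodePresent op vis u ∧ icsNodePresent op vis v :=
  fun _ _ h =>
    ⟨icsNodePresent_left_of_icsEdgePresent h, icsNodePresent_right_of_icsEdgePresent h⟩

/-- Dangling edge safety for the ICS of the DD graph. -/
theorem stmt11 {E N : Type} (op : E → GOp N) (vis : E → E → Prop)
    (hwf : wellFormed op vis) :
    ∀ u v, icsEdgePresent op vis u v →
      icsNodePresent op vis u ∧ icsNodePresent op vis v :=
  stmt11_general op vis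
end
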